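/- arXiv:2506.17749 — 2 statements merged into one kernel-verified Lean document; each statement's English description precedes it below -/
import Mathlib

section
/- Let U : ℝ → ℝ be the polynomial U(z) = z⁵ − (5/3)z⁴ − (5/3)z + 1. Then: (i) U''(0) = 0 and U''(1) = 0 (so the shear flow u₀ = (U(z),0,0) on 𝕋 × (0,1) satisfies the diffusion-free boundary conditions at the walls z = 0, 1); (ii) ∫₀¹ U(z) dz = 0 (zero flux); and (iii) ∫₀¹ U''(z) U(z) dz = 20/63 > 0. Consequently ν ∫ Δu₀ · u₀ = 20ν/63 > 0 for ν > 0, so the kinetic energy of the corresponding Navier–Stokes solution with diffusion-free boundary conditions increases near the initial time. -/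
/-- For `U(z) = z⁵ − (5/3)z⁴ − (5/3)z + 1`: `U''(0) = U''(1) = 0` (diffusion-free
boundary conditions for the shear flow `u₀ = (U(z),0,0)`), `∫₀¹ U = 0` (zero flux),
`∫₀¹ U''U = 20/63 > 0`, hence `ν ∫ Δu₀·u₀ = 20ν/63 > 0` for `ν > 0`: the kinetic
energy increases near the initial time. -/
theorem stmt14 (U : ℝ → ℝ)
    (hU : ∀ z : ℝ, U z = z ^ 5 - (5 / 3) * z ^ 4 - (5 / 3) * z + 1) :
    deriv (deriv U) 0 = 0
    ∧ deriv (deriv U) 1 = 0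
    ∧ (∫ z in (0:ℝ)..1, U z) = 0
    ∧ (∫ z in (0:ℝ)..1, deriv (deriv U) z * U z) = 20 / 63
    ∧ (0 : ℝ) < 20 / 63
    ∧ ∀ ν : ℝ, 0 < ν →
        ν * (∫ z in (0:ℝ)..1, deriv (deriv U) z * U z) = 20 * ν / 63
        ∧ 0 < 20 * ν / 63 := by
  have hUe : U = fun z : ℝ => z ^ 5 - (5 / 3) * z ^ 4 - (5 / 3) * z + 1 := funext hU
  subst hUe
  have h1 : deriv (fun z : ℝ => z ^ 5 - (5 / 3) * z ^ 4 - (5 / 3) * z + 1)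
      = fun z : ℝ => 5 * z ^ 4 - (20 / 3) * z ^ 3 - 5 / 3 := by
    funext z
    have : HasDerivAt (fun z : ℝ => z ^ 5 - (5 / 3) * z ^ 4 - (5 / 3) * z + 1)
        (5 * z ^ 4 - (20 / 3) * z ^ 3 - 5 / 3) z := by
      have := (((hasDerivAt_pow 5 z).sub (((hasDerivAt_pow 4 z).const_mul (5/3 : ℝ)))).sub
        ((hasDerivAt_id z).const_mul (5/3 : ℝ))).add_const (1 : ℝ)
      refine this.congr_deriv ?_
      ring
    exact this.deriv
  rw [h1]
  have h2 : deriv (fun z : ℝ => 5 * z ^ 4 - (20 / 3) * z ^ 3 - 5 / 3)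
      = fun z : ℝ => 20 * z ^ 3 - 20 * z ^ 2 := by
    funext z
    have : HasDerivAt (fun z : ℝ => 5 * z ^ 4 - (20 / 3) * z ^ 3 - 5 / 3)
        (20 * z ^ 3 - 20 * z ^ 2) z := by
      have := (((hasDerivAt_pow 4 z).const_mul (5 : ℝ)).sub
        ((hasDerivAt_pow 3 z).const_mul (20/3 : ℝ))).sub_const (5/3 : ℝ)
      refine this.congr_deriv ?_
      ring
    exact this.deriv
  rw [h2]
  have hI1 : (∫ z in (0:ℝ)..1, z ^ 5 - (5 / 3) * z ^ 4 - (5 / 3) * z + 1) = 0 := by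
    have key : ∀ z ∈ Set.uIcc (0:ℝ) 1,
        HasDerivAt (fun z : ℝ => (1/6) * z ^ 6 - (1/3) * z ^ 5 - (5/6) * z ^ 2 + z)
          (z ^ 5 - (5 / 3) * z ^ 4 - (5 / 3) * z + 1) z := by
      intro z _
      have := ((((hasDerivAt_pow 6 z).const_mul (1/6 : ℝ)).sub
        ((hasDerivAt_pow 5 z).const_mul (1/3 : ℝ))).sub
        ((hasDerivAt_pow 2 z).const_mul (5/6 : ℝ))).add (hasDerivAt_id z)
      refine this.congr_deriv ?_
      ring
    rw [intervalIntegral.integral_eq_sub_of_hasDerivAt key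
      ((Continuous.intervalIntegrable (by fun_prop) 0 1))]
    norm_num
  have hI2 : (∫ z in (0:ℝ)..1,
      (20 * z ^ 3 - 20 * z ^ 2) * (z ^ 5 - (5 / 3) * z ^ 4 - (5 / 3) * z + 1)) = 20 / 63 := by
    have key : ∀ z ∈ Set.uIcc (0:ℝ) 1,
        HasDerivAt (fun z : ℝ => (20/9) * z ^ 9 - (20/3) * z ^ 8 + (100/21) * z ^ 7
            - (20/3) * z ^ 5 + (40/3) * z ^ 4 - (20/3) * z ^ 3)
          ((20 * z ^ 3 - 20 * z ^ 2) * (z ^ 5 - (5 / 3) * z ^ 4 - (5 / 3) * z + 1)) z := by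
      intro z _
      have := ((((((hasDerivAt_pow 9 z).const_mul (20/9 : ℝ)).sub
        ((hasDerivAt_pow 8 z).const_mul (20/3 : ℝ))).add
        ((hasDerivAt_pow 7 z).const_mul (100/21 : ℝ))).sub
        ((hasDerivAt_pow 5 z).const_mul (20/3 : ℝ))).add
        ((hasDerivAt_pow 4 z).const_mul (40/3 : ℝ))).sub
        ((hasDerivAt_pow 3 z).const_mul (20/3 : ℝ))
      refine this.congr_deriv ?_
      ring
    rw [intervalIntegral.integral_eq_sub_of_hasDerivAt key
      ((Continuous.intervalIntegrable (by fun_prop) 0 1))]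
    norm_num
  refine ⟨by norm_num, by norm_num, hI1, hI2, by norm_num, fun ν hν => ⟨by rw [hI2]; ring, by positivity⟩⟩
end

section
/- Let a > 0, ν ∈ ℝ, let Ω ⊆ ℝ² be an open set containing the circle C_a = {x ∈ ℝ² : |x| = a}, and let u : ℝ × Ω → ℝ² and p : ℝ × Ω → ℝ be smooth (C^∞) satisfying the incompressible Navier–Stokes equations ∂ₜu + (u·∇)u + ∇p − νΔu = 0 and div u = 0 on ℝ × Ω, together with, for all t and all x ∈ C_a, the impermeability condition u(t,x)·x = 0 and the diffusion-free condition Δu(t,x)·x^⊥ = 0 (where x^⊥ = (−x₂,x₁)). Then the circulation Γ(t) = ∫₀^{2π} u(t, a cos θ, a sin θ) · (−sin θ, cos θ) a dθ is constant in t. -/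
/-- Partial derivative in direction `i` of a scalar function on `Fin d → ℝ`. -/
noncomputable def pd {d : ℕ} (i : Fin d) (f : (Fin d → ℝ) → ℝ) (x : Fin d → ℝ) : ℝ :=
  fderiv ℝ f x (Pi.single i 1)

/-- Componentwise Laplacian of a scalar function on `Fin d → ℝ`. -/
noncomputable def lap {d : ℕ} (f : (Fin d → ℝ) → ℝ) (x : Fin d → ℝ) : ℝ :=
  ∑ i, pd i (pd i f) x

/- Auxiliary material -/

/-- The circle parametrization. -/
noncomputable def circ (a : ℝ) (θ : ℝ) : Fin 2 → ℝ := ![a * Real.cos θ, a * Real.sin θ]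

lemma circ_cont (a : ℝ) : Continuous (circ a) := by
  apply continuous_pi
  intro i
  fin_cases i <;> simp [circ] <;> fun_prop

lemma circ_sq (a θ : ℝ) : (circ a θ 0) ^ 2 + (circ a θ 1) ^ 2 = a ^ 2 := by
  simp only [circ, Matrix.cons_val_zero, Matrix.cons_val_one, Matrix.head_cons]
  linear_combination a ^ 2 * (Real.sin_sq_add_cos_sq θ)

section helpers

variable {f : ℝ × (Fin 2 → ℝ) → ℝ} {Ω : Set (Fin 2 → ℝ)}

lemma hfd (hΩ : IsOpen Ω) (hf : ContDiffOn ℝ 1 f (Set.univ ×ˢ Ω))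
    (t : ℝ) {x : Fin 2 → ℝ} (hx : x ∈ Ω) :
    HasFDerivAt f (fderiv ℝ f (t,x)) (t,x) :=
  ((hf.differentiableOn one_ne_zero).differentiableAt
    ((isOpen_univ.prod hΩ).mem_nhds ⟨Set.mem_univ _, hx⟩)).hasFDerivAt

lemma time_deriv (hΩ : IsOpen Ω) (hf : ContDiffOn ℝ 1 f (Set.univ ×ˢ Ω))
    (t : ℝ) {x : Fin 2 → ℝ} (hx : x ∈ Ω) :
    HasDerivAt (fun s => f (s, x)) (fderiv ℝ f (t,x) (1, 0)) t :=
  (hfd hΩ hf t hx).comp_hasDerivAt t ((hasDerivAt_id t).prodMk (hasDerivAt_const t x))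

lemma pd_eq (hΩ : IsOpen Ω) (hf : ContDiffOn ℝ 1 f (Set.univ ×ˢ Ω))
    (t : ℝ) {x : Fin 2 → ℝ} (hx : x ∈ Ω) (i : Fin 2) :
    pd i (fun y => f (t, y)) x = fderiv ℝ f (t,x) (0, Pi.single i 1) := by
  have h : HasFDerivAt (fun y : Fin 2 → ℝ => (t, y))
      (ContinuousLinearMap.inr ℝ ℝ (Fin 2 → ℝ)) x :=
    (hasFDerivAt_const t x).prodMk (hasFDerivAt_id x)
  have h2 : HasFDerivAt (fun y => f (t, y))
      ((fderiv ℝ f (t, x)).comp (ContinuousLinearMap.inr ℝ ℝ (Fin 2 → ℝ))) x :=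
    (hfd hΩ hf t hx).comp x h
  rw [pd, h2.fderiv]; rfl

lemma pair_decomp (b d : ℝ) :
    ((0:ℝ), (![b, d] : Fin 2 → ℝ))
      = b • ((0:ℝ), (Pi.single 0 1 : Fin 2 → ℝ)) + d • ((0:ℝ), (Pi.single 1 1 : Fin 2 → ℝ)) := by
  ext i
  · simp
  · fin_cases i <;> simp

lemma theta_deriv (hΩ : IsOpen Ω) (hf : ContDiffOn ℝ 1 f (Set.univ ×ˢ Ω))
    (t a θ : ℝ) (hx : circ a θ ∈ Ω) :
    HasDerivAt (fun φ => f (t, circ a φ))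
      ((-(a * Real.sin θ)) * pd 0 (fun y => f (t,y)) (circ a θ)
        + (a * Real.cos θ) * pd 1 (fun y => f (t,y)) (circ a θ)) θ := by
  have hc : HasDerivAt (circ a) (![-(a * Real.sin θ), a * Real.cos θ]) θ := by
    rw [hasDerivAt_pi]
    intro i
    fin_cases i
    · simpa [circ] using ((Real.hasDerivAt_cos θ).const_mul a)
    · simpa [circ] using ((Real.hasDerivAt_sin θ).const_mul a)
  have h : HasDerivAt (fun φ : ℝ => (t, circ a φ))
      ((0:ℝ), (![-(a * Real.sin θ), a * Real.cos θ] : Fin 2 → ℝ)) θ :=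
    (hasDerivAt_const θ t).prodMk hc
  have h2 := (hfd hΩ hf t hx).comp_hasDerivAt θ h
  rw [pair_decomp, map_add, ContinuousLinearMap.map_smul, ContinuousLinearMap.map_smul] at h2
  simp [pd_eq hΩ hf t hx, smul_eq_mul] at h2 ⊢
  exact h2

lemma cont_Dt (hΩ : IsOpen Ω) (hf : ContDiffOn ℝ 1 f (Set.univ ×ˢ Ω))
    (a : ℝ) (hall : ∀ θ : ℝ, circ a θ ∈ Ω) (v : ℝ × (Fin 2 → ℝ)) :
    Continuous (fun q : ℝ × ℝ => fderiv ℝ f (q.1, circ a q.2) v) := by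
  have h1 : Continuous (fun q : ℝ × ℝ => fderiv ℝ f (q.1, circ a q.2)) := by
    apply (hf.continuousOn_fderiv_of_isOpen (isOpen_univ.prod hΩ) le_rfl).comp_continuous
    · exact continuous_fst.prodMk ((circ_cont a).comp continuous_snd)
    · exact fun q => ⟨Set.mem_univ _, hall q.2⟩
  exact h1.clm_apply continuous_const

lemma cont_comp (hΩ : IsOpen Ω) (hf : ContDiffOn ℝ 1 f (Set.univ ×ˢ Ω))
    (a : ℝ) (hall : ∀ θ : ℝ, circ a θ ∈ Ω) :
    Continuous (fun q : ℝ × ℝ => f (q.1, circ a q.2)) := by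
  apply (hf.continuousOn).comp_continuous
  · exact continuous_fst.prodMk ((circ_cont a).comp continuous_snd)
  · exact fun q => ⟨Set.mem_univ _, hall q.2⟩

end helpers

/-- For a smooth solution `(u,p)` of the incompressible Navier–Stokes equations on an
open set `Ω ⊆ ℝ²` containing the circle `C_a = {|x| = a}`, satisfying on `C_a` the
impermeability condition `u·x = 0` and the diffusion-free condition `Δu·x^⊥ = 0`, the
circulation `Γ(t) = ∮_{C_a} u(t,·)·τ` around the circle is constant in time. -/
theorem stmt15 (a : ℝ) (ha : 0 < a) (ν : ℝ)
    (Ω : Set (Fin 2 → ℝ)) (hΩ : IsOpen Ω)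
    (hcirc : ∀ x : Fin 2 → ℝ, (x 0) ^ 2 + (x 1) ^ 2 = a ^ 2 → x ∈ Ω)
    (u : ℝ → (Fin 2 → ℝ) → (Fin 2 → ℝ)) (p : ℝ → (Fin 2 → ℝ) → ℝ)
    (hu : ∀ n : ℕ, ContDiffOn ℝ n (fun q : ℝ × (Fin 2 → ℝ) => u q.1 q.2) (Set.univ ×ˢ Ω))
    (hp : ∀ n : ℕ, ContDiffOn ℝ n (fun q : ℝ × (Fin 2 → ℝ) => p q.1 q.2) (Set.univ ×ˢ Ω))
    (hNS : ∀ (t : ℝ), ∀ x ∈ Ω, ∀ j : Fin 2,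
      deriv (fun s => u s x j) t
        + (∑ i, u t x i * pd i (fun y => u t y j) x)
        + pd j (p t) x - ν * lap (fun y => u t y j) x = 0)
    (hdiv : ∀ (t : ℝ), ∀ x ∈ Ω, ∑ i, pd i (fun y => u t y i) x = 0)
    (himp : ∀ (t : ℝ) (x : Fin 2 → ℝ), (x 0) ^ 2 + (x 1) ^ 2 = a ^ 2 →
      u t x 0 * x 0 + u t x 1 * x 1 = 0)
    (hdf : ∀ (t : ℝ) (x : Fin 2 → ℝ), (x 0) ^ 2 + (x 1) ^ 2 = a ^ 2 →
      lap (fun y => u t y 0) x * (-(x 1)) + lap (fun y => u t y 1) x * x 0 = 0) :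
    ∀ t₁ t₂ : ℝ,
      (∫ θ in (0:ℝ)..(2 * Real.pi),
        (u t₁ ![a * Real.cos θ, a * Real.sin θ] 0 * (-Real.sin θ)
          + u t₁ ![a * Real.cos θ, a * Real.sin θ] 1 * Real.cos θ) * a)
      = ∫ θ in (0:ℝ)..(2 * Real.pi),
          (u t₂ ![a * Real.cos θ, a * Real.sin θ] 0 * (-Real.sin θ)
            + u t₂ ![a * Real.cos θ, a * Real.sin θ] 1 * Real.cos θ) * a := by
  -- basic setup
  have hmem : ∀ θ : ℝ, circ a θ ∈ Ω := fun θ => hcirc _ (circ_sq a θ)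
  have huj : ∀ j : Fin 2, ContDiffOn ℝ 1
      (fun q : ℝ × (Fin 2 → ℝ) => u q.1 q.2 j) (Set.univ ×ˢ Ω) := by
    intro j
    have h1 : ContDiffOn ℝ 1 (fun q : ℝ × (Fin 2 → ℝ) => u q.1 q.2) (Set.univ ×ˢ Ω) := by
      exact_mod_cast hu 1
    exact (ContinuousLinearMap.proj j : ((Fin 2 → ℝ)) →L[ℝ] ℝ).contDiff.comp_contDiffOn h1
  have hpc : ContDiffOn ℝ 1 (fun q : ℝ × (Fin 2 → ℝ) => p q.1 q.2) (Set.univ ×ˢ Ω) := by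
    exact_mod_cast hp 1
  -- key time-derivative function
  set Ft : ℝ → ℝ → ℝ := fun t θ =>
    (fderiv ℝ (fun q : ℝ × (Fin 2 → ℝ) => u q.1 q.2 0) (t, circ a θ) (1, 0) * (-Real.sin θ)
      + fderiv ℝ (fun q : ℝ × (Fin 2 → ℝ) => u q.1 q.2 1) (t, circ a θ) (1, 0) * Real.cos θ) * a
    with hFt_def
  -- time derivative of the integrand
  have hFt : ∀ (t θ : ℝ),
      HasDerivAt (fun s => (u s (circ a θ) 0 * (-Real.sin θ)
        + u s (circ a θ) 1 * Real.cos θ) * a) (Ft t θ) t := by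
    intro t θ
    exact (((time_deriv hΩ (huj 0) t (hmem θ)).mul_const (-Real.sin θ)).add
      ((time_deriv hΩ (huj 1) t (hmem θ)).mul_const (Real.cos θ))).mul_const a
  -- joint continuity of Ft
  have hFtcont : Continuous (fun q : ℝ × ℝ => Ft q.1 q.2) := by
    apply Continuous.mul _ continuous_const
    apply Continuous.add
    · exact (cont_Dt hΩ (huj 0) a hmem (1, 0)).mul (by fun_prop)
    · exact (cont_Dt hΩ (huj 1) a hmem (1, 0)).mul (by fun_prop)
  -- the θ-integral of Ft vanishes, by the NS equation and the boundary conditions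
  have step_theta : ∀ t : ℝ, (∫ θ in (0:ℝ)..(2 * Real.pi), Ft t θ) = 0 := by
    intro t
    -- the primitive in θ
    have hH : ∀ θ : ℝ, HasDerivAt (fun φ =>
        -((u t (circ a φ) 0 * (-Real.sin φ) + u t (circ a φ) 1 * Real.cos φ)
          * (u t (circ a φ) 0 * (-Real.sin φ) + u t (circ a φ) 1 * Real.cos φ) / 2)
        - p t (circ a φ)) (Ft t θ) θ := by
      intro θ
      have hU0d : HasDerivAt (fun φ => u t (circ a φ) 0)
          ((-(a * Real.sin θ)) * pd 0 (fun y => u t y 0) (circ a θ)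
            + (a * Real.cos θ) * pd 1 (fun y => u t y 0) (circ a θ)) θ :=
        theta_deriv hΩ (huj 0) t a θ (hmem θ)
      have hU1d : HasDerivAt (fun φ => u t (circ a φ) 1)
          ((-(a * Real.sin θ)) * pd 0 (fun y => u t y 1) (circ a θ)
            + (a * Real.cos θ) * pd 1 (fun y => u t y 1) (circ a θ)) θ :=
        theta_deriv hΩ (huj 1) t a θ (hmem θ)
      have hPd : HasDerivAt (fun φ => p t (circ a φ))
          ((-(a * Real.sin θ)) * pd 0 (fun y => p t y) (circ a θ)
            + (a * Real.cos θ) * pd 1 (fun y => p t y) (circ a θ)) θ :=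
        theta_deriv hΩ hpc t a θ (hmem θ)
      have hsin : HasDerivAt (fun φ : ℝ => -Real.sin φ) (-Real.cos θ) θ :=
        (Real.hasDerivAt_sin θ).neg
      have hcos : HasDerivAt Real.cos (-Real.sin θ) θ := Real.hasDerivAt_cos θ
      have hGd := (hU0d.mul hsin).add (hU1d.mul hcos)
      have hHd := (((hGd.mul hGd).div_const 2).neg).sub hPd
      refine HasDerivAt.congr_deriv hHd (Eq.symm ?_)
      -- now prove the algebraic identity
      have e0 : fderiv ℝ (fun q : ℝ × (Fin 2 → ℝ) => u q.1 q.2 0) (t, circ a θ) (1, 0)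
          = deriv (fun s => u s (circ a θ) 0) t :=
        ((time_deriv hΩ (huj 0) t (hmem θ)).deriv).symm
      have e1 : fderiv ℝ (fun q : ℝ × (Fin 2 → ℝ) => u q.1 q.2 1) (t, circ a θ) (1, 0)
          = deriv (fun s => u s (circ a θ) 1) t :=
        ((time_deriv hΩ (huj 1) t (hmem θ)).deriv).symm
      have hNS0 := hNS t (circ a θ) (hmem θ) 0
      have hNS1 := hNS t (circ a θ) (hmem θ) 1
      simp only [Fin.sum_univ_two] at hNS0 hNS1
      have hdf' := hdf t (circ a θ) (circ_sq a θ)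
      have himp' := himp t (circ a θ) (circ_sq a θ)
      have hc0 : circ a θ 0 = a * Real.cos θ := by simp [circ]
      have hc1 : circ a θ 1 = a * Real.sin θ := by simp [circ]
      rw [hc0, hc1] at hdf' himp'
      have hsc := Real.sin_sq_add_cos_sq θ
      -- derive pointwise tangentiality
      have h1' : u t (circ a θ) 0 * Real.cos θ + u t (circ a θ) 1 * Real.sin θ = 0 := by
        rcases mul_eq_zero.1 (show a * (u t (circ a θ) 0 * Real.cos θ
            + u t (circ a θ) 1 * Real.sin θ) = 0 by linear_combination himp') with h | h
        · exact absurd h (ne_of_gt ha)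
        · exact h
      obtain ⟨Gv, hGv⟩ : ∃ g : ℝ, g = u t (circ a θ) 0 * (-Real.sin θ)
          + u t (circ a θ) 1 * Real.cos θ := ⟨_, rfl⟩
      have e0' : u t (circ a θ) 0 = -Gv * Real.sin θ := by
        rw [hGv]; linear_combination Real.cos θ * h1' - u t (circ a θ) 0 * hsc
      have e1' : u t (circ a θ) 1 = Gv * Real.cos θ := by
        rw [hGv]; linear_combination Real.sin θ * h1' - u t (circ a θ) 1 * hsc
      rw [hFt_def]
      simp only []
      simp only [Pi.add_apply, Pi.mul_apply]
      rw [e0, e1]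
      rw [e0', e1'] at hNS0 hNS1 ⊢
      linear_combination (-(a * Real.sin θ)) * hNS0 + (a * Real.cos θ) * hNS1
        + ν * hdf'
        + (Gv * (a * ((Real.sin θ)^2 * pd 0 (fun y => u t y 0) (circ a θ)
            - Real.sin θ * Real.cos θ * (pd 1 (fun y => u t y 0) (circ a θ)
              + pd 0 (fun y => u t y 1) (circ a θ))
            + (Real.cos θ)^2 * pd 1 (fun y => u t y 1) (circ a θ)))) * hsc
    -- FTC in θ
    have hint : IntervalIntegrable (Ft t) MeasureTheory.volume 0 (2 * Real.pi) :=
      (hFtcont.comp (continuous_const.prodMk continuous_id)).intervalIntegrable 0 (2 * Real.pi)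
    rw [intervalIntegral.integral_eq_sub_of_hasDerivAt (fun θ _ => hH θ) hint]
    have hper : circ a (2 * Real.pi) = circ a 0 := by
      funext i
      fin_cases i <;> simp [circ, Real.sin_two_pi, Real.cos_two_pi]
    rw [hper]
    simp [Real.sin_two_pi, Real.cos_two_pi]
  -- now the main argument, for t₁ ≤ t₂
  suffices key : ∀ t₁ t₂ : ℝ, t₁ ≤ t₂ →
      (∫ θ in (0:ℝ)..(2 * Real.pi),
        (u t₁ (circ a θ) 0 * (-Real.sin θ) + u t₁ (circ a θ) 1 * Real.cos θ) * a)
      = ∫ θ in (0:ℝ)..(2 * Real.pi),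
        (u t₂ (circ a θ) 0 * (-Real.sin θ) + u t₂ (circ a θ) 1 * Real.cos θ) * a by
    intro t₁ t₂
    rcases le_total t₁ t₂ with h | h
    · exact key t₁ t₂ h
    · exact (key t₂ t₁ h).symm
  intro t₁ t₂ hle
  -- FTC in t
  have step_t : ∀ θ : ℝ, (∫ t in t₁..t₂, Ft t θ)
      = (u t₂ (circ a θ) 0 * (-Real.sin θ) + u t₂ (circ a θ) 1 * Real.cos θ) * a
        - (u t₁ (circ a θ) 0 * (-Real.sin θ) + u t₁ (circ a θ) 1 * Real.cos θ) * a := by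
    intro θ
    exact intervalIntegral.integral_eq_sub_of_hasDerivAt (fun t _ => hFt t θ)
      ((hFtcont.comp (continuous_id.prodMk continuous_const)).intervalIntegrable t₁ t₂)
  -- Fubini
  have swap : (∫ θ in (0:ℝ)..(2 * Real.pi), ∫ t in t₁..t₂, Ft t θ)
      = ∫ t in t₁..t₂, ∫ θ in (0:ℝ)..(2 * Real.pi), Ft t θ := by
    rw [intervalIntegral.integral_of_le Real.two_pi_pos.le,
      intervalIntegral.integral_of_le hle]
    simp_rw [intervalIntegral.integral_of_le hle,
      intervalIntegral.integral_of_le Real.two_pi_pos.le]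
    have hInt : MeasureTheory.Integrable (Function.uncurry fun θ t => Ft t θ)
        ((MeasureTheory.volume.restrict (Set.Ioc (0:ℝ) (2 * Real.pi))).prod
          (MeasureTheory.volume.restrict (Set.Ioc t₁ t₂))) := by
      rw [MeasureTheory.Measure.prod_restrict]
      have hc : Continuous (Function.uncurry fun (θ t : ℝ) => Ft t θ) :=
        hFtcont.comp (continuous_snd.prodMk continuous_fst)
      have : MeasureTheory.IntegrableOn (Function.uncurry fun (θ t : ℝ) => Ft t θ)
          (Set.Icc (0:ℝ) (2 * Real.pi) ×ˢ Set.Icc t₁ t₂) MeasureTheory.volume :=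
        hc.continuousOn.integrableOn_compact (isCompact_Icc.prod isCompact_Icc)
      exact this.mono_set (Set.prod_mono Set.Ioc_subset_Icc_self Set.Ioc_subset_Icc_self)
    exact MeasureTheory.integral_integral_swap hInt
  -- continuity of the integrand for integrability
  have hFcont : ∀ s : ℝ, Continuous (fun θ =>
      (u s (circ a θ) 0 * (-Real.sin θ) + u s (circ a θ) 1 * Real.cos θ) * a) := by
    intro s
    have h0 : Continuous (fun θ => u s (circ a θ) 0) :=
      (cont_comp hΩ (huj 0) a hmem).comp (continuous_const.prodMk continuous_id)
    have h1 : Continuous (fun θ => u s (circ a θ) 1) :=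
      (cont_comp hΩ (huj 1) a hmem).comp (continuous_const.prodMk continuous_id)
    exact ((h0.mul (Real.continuous_sin.neg)).add (h1.mul Real.continuous_cos)).mul
      continuous_const
  have hint1 : IntervalIntegrable (fun θ =>
      (u t₁ (circ a θ) 0 * (-Real.sin θ) + u t₁ (circ a θ) 1 * Real.cos θ) * a)
      MeasureTheory.volume 0 (2 * Real.pi) :=
    (hFcont t₁).intervalIntegrable 0 (2 * Real.pi)
  have hint2 : IntervalIntegrable (fun θ =>
      (u t₂ (circ a θ) 0 * (-Real.sin θ) + u t₂ (circ a θ) 1 * Real.cos θ) * a)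
      MeasureTheory.volume 0 (2 * Real.pi) :=
    (hFcont t₂).intervalIntegrable 0 (2 * Real.pi)
  have main : (∫ θ in (0:ℝ)..(2 * Real.pi),
      ((u t₂ (circ a θ) 0 * (-Real.sin θ) + u t₂ (circ a θ) 1 * Real.cos θ) * a
        - (u t₁ (circ a θ) 0 * (-Real.sin θ) + u t₁ (circ a θ) 1 * Real.cos θ) * a)) = 0 := by
    rw [intervalIntegral.integral_congr (fun θ _ => (step_t θ).symm), swap]
    simp [step_theta]
  rw [intervalIntegral.integral_sub hint2 hint1] at main
  linarith
end
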